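/- Let λ > 0 and s̃ ≥ 1 be an integer with ρ := ρ₋(A, s̄+2s̃) > 0, and suppose x* is a minimizer of φ_λ over ℝⁿ with ‖x*_{S̄ᶜ}‖₀ ≤ s̃. Let x ∈ ℝⁿ with ‖x_{S̄ᶜ}‖₀ ≤ s̃, let M ≥ ρ/2, set x⁺ = T_{λ,M}(x), and suppose the descent condition φ_λ(x⁺) ≤ ψ_{λ,M}(x; x⁺) holds. Then φ_λ(x⁺) − φ_λ(x*) ≤ (1 − ρ/(4M)) · (φ_λ(x) − φ_λ(x*)). -/

import Mathlib

open scoped BigOperators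
open Matrix

noncomputable section

namespace PGH

/-- Euclidean dot product on `Fin n → ℝ`. -/
def dot {n : ℕ} (x y : Fin n → ℝ) : ℝ := ∑ i, x i * y i

/-- Squared Euclidean norm. -/
def sqnorm {n : ℕ} (x : Fin n → ℝ) : ℝ := ∑ i, (x i) ^ 2

/-- Euclidean (ℓ₂) norm. -/
noncomputable def l2 {n : ℕ} (x : Fin n → ℝ) : ℝ := Real.sqrt (sqnorm x)

/-- ℓ₁ norm. -/
def l1 {n : ℕ} (x : Fin n → ℝ) : ℝ := ∑ i, |x i|

/-- ℓ∞ norm (maximum absolute coordinate). -/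
noncomputable def linf {n : ℕ} (x : Fin n → ℝ) : ℝ := ⨆ i, |x i|

/-- Support of a vector. -/
def supp {n : ℕ} (x : Fin n → ℝ) : Finset (Fin n) := Finset.univ.filter (fun i => x i ≠ 0)

/-- Number of nonzero coordinates. -/
def l0 {n : ℕ} (x : Fin n → ℝ) : ℕ := (supp x).card

/-- Number of nonzero coordinates within the index set `S`
(i.e. `‖x_S‖₀` for the restriction of `x` to `S`). -/
def l0on {n : ℕ} (S : Finset (Fin n)) (x : Fin n → ℝ) : ℕ :=
  (S.filter (fun i => x i ≠ 0)).card

/-- ℓ₁ norm of the restriction of `x` to the index set `S`. -/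
def l1on {n : ℕ} (S : Finset (Fin n)) (x : Fin n → ℝ) : ℝ := ∑ i ∈ S, |x i|

/-- Gradient of `f(x) = (1/2)‖Ax - b‖₂²`, namely `Aᵀ(Ax - b)`. -/
def grad {m n : ℕ} (A : Matrix (Fin m) (Fin n) ℝ) (b : Fin m → ℝ) (x : Fin n → ℝ) :
    Fin n → ℝ :=
  Aᵀ.mulVec (A.mulVec x - b)

/-- Least-squares objective `f(x) = (1/2)‖Ax - b‖₂²`. -/
def fls {m n : ℕ} (A : Matrix (Fin m) (Fin n) ℝ) (b : Fin m → ℝ) (x : Fin n → ℝ) : ℝ :=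
  sqnorm (A.mulVec x - b) / 2

/-- ℓ₁-regularized least-squares objective `φ_λ(x) = f(x) + λ‖x‖₁`. -/
def phi {m n : ℕ} (A : Matrix (Fin m) (Fin n) ℝ) (b : Fin m → ℝ) (lam : ℝ)
    (x : Fin n → ℝ) : ℝ :=
  fls A b x + lam * l1 x

/-- Restricted maximal eigenvalue `ρ₊(A, s)`. -/
noncomputable def rhoPlus {m n : ℕ} (A : Matrix (Fin m) (Fin n) ℝ) (s : ℕ) : ℝ :=
  sSup {r | ∃ x : Fin n → ℝ, x ≠ 0 ∧ l0 x ≤ s ∧ r = sqnorm (A.mulVec x) / sqnorm x}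

/-- Restricted minimal eigenvalue `ρ₋(A, s)`. -/
noncomputable def rhoMinus {m n : ℕ} (A : Matrix (Fin m) (Fin n) ℝ) (s : ℕ) : ℝ :=
  sInf {r | ∃ x : Fin n → ℝ, x ≠ 0 ∧ l0 x ≤ s ∧ r = sqnorm (A.mulVec x) / sqnorm x}

/-- `ξ` is a subgradient of the ℓ₁ norm at `x`. -/
def IsSubgrad {n : ℕ} (x ξ : Fin n → ℝ) : Prop :=
  ∀ i, (x i ≠ 0 → ξ i = Real.sign (x i)) ∧ (x i = 0 → |ξ i| ≤ 1)

/-- Optimality residue `ω_λ(x) = min_{ξ ∈ ∂‖x‖₁} ‖Aᵀ(Ax−b) + λξ‖_∞`. -/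
noncomputable def omega {m n : ℕ} (A : Matrix (Fin m) (Fin n) ℝ) (b : Fin m → ℝ)
    (lam : ℝ) (x : Fin n → ℝ) : ℝ :=
  sInf {r | ∃ ξ : Fin n → ℝ, IsSubgrad x ξ ∧
    r = linf (fun i => grad A b x i + lam * ξ i)}

/-- The local model `ψ_{λ,L}(y; x)`. -/
def psi {m n : ℕ} (A : Matrix (Fin m) (Fin n) ℝ) (b : Fin m → ℝ) (lam L : ℝ)
    (y x : Fin n → ℝ) : ℝ :=
  fls A b y + dot (grad A b y) (x - y) + L / 2 * sqnorm (x - y) + lam * l1 x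

/-- The noise-domination condition
`λ ≥ max{4, (γ+1)/((1−δ')γ−(1+δ'))} ⬝ ‖Aᵀz‖_∞`. -/
def noiseCond {m n : ℕ} (A : Matrix (Fin m) (Fin n) ℝ) (z : Fin m → ℝ)
    (dp gam lam : ℝ) : Prop :=
  lam ≥ max 4 ((gam + 1) / ((1 - dp) * gam - (1 + dp))) * linf (Aᵀ.mulVec z)


/-!
Compare `xplus` with `u = x + a • (xstar - x)`, `a = ρ / (2M)`, on the model `ψ(x; ·)`.
Because `f` is quadratic, its linearization at `x` undershoots `f xstar` by exactly
`‖A (xstar - x)‖² / 2`, and `xstar - x` is `(s̄ + 2s̃)`-sparse, so this gap is at least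
`ρ ‖xstar - x‖² / 2`. That is enough to absorb the proximal term `a² M ‖xstar - x‖² / 2`,
leaving `φ xplus ≤ (1 - a) φ x + a φ xstar`, i.e. even the factor `1 - ρ / (2M)`.
-/

variable {m n : ℕ}

lemma sqnorm_eq_dotProduct (x : Fin n → ℝ) : sqnorm x = x ⬝ᵥ x := by
  simp only [sqnorm, dotProduct, sq]

lemma dot_eq_dotProduct (x y : Fin n → ℝ) : dot x y = x ⬝ᵥ y := rfl

lemma sqnorm_nonneg (x : Fin n → ℝ) : 0 ≤ sqnorm x :=
  Finset.sum_nonneg fun i _ => sq_nonneg (x i)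

lemma sqnorm_smul (a : ℝ) (x : Fin n → ℝ) : sqnorm (a • x) = a ^ 2 * sqnorm x := by
  simp only [sqnorm_eq_dotProduct, smul_dotProduct, dotProduct_smul, smul_eq_mul]
  ring

lemma sqnorm_add (x y : Fin n → ℝ) :
    sqnorm (x + y) = sqnorm x + 2 * (x ⬝ᵥ y) + sqnorm y := by
  simp only [sqnorm_eq_dotProduct, add_dotProduct, dotProduct_add, dotProduct_comm y x]
  ring

lemma l0_le_card_add_l0on_compl (S : Finset (Fin n)) (x : Fin n → ℝ) :
    l0 x ≤ S.card + l0on Sᶜ x := by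
  refine (Finset.card_le_card fun i hi => ?_).trans (Finset.card_union_le S _)
  by_cases hiS : i ∈ S
  · exact Finset.mem_union_left _ hiS
  · simp_all [supp]

lemma l0on_sub_le (T : Finset (Fin n)) (x y : Fin n → ℝ) :
    l0on T (x - y) ≤ l0on T x + l0on T y := by
  refine (Finset.card_le_card fun i hi => ?_).trans (Finset.card_union_le _ _)
  simp only [Finset.mem_filter, Pi.sub_apply, Finset.mem_union] at hi ⊢
  by_contra! h
  exact hi.2 (by rw [h.1 hi.1, h.2 hi.1, sub_zero])

lemma rhoMinus_mul_sqnorm_le (A : Matrix (Fin m) (Fin n) ℝ) {s : ℕ} {x : Fin n → ℝ}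
    (hx : l0 x ≤ s) : rhoMinus A s * sqnorm x ≤ sqnorm (A *ᵥ x) := by
  obtain rfl | hx0 := eq_or_ne x 0
  · simp [sqnorm]
  have hpos : 0 < sqnorm x := (sqnorm_nonneg x).lt_of_ne
    (by rwa [ne_comm, sqnorm_eq_dotProduct, Ne, dotProduct_self_eq_zero])
  have hle : rhoMinus A s ≤ sqnorm (A *ᵥ x) / sqnorm x :=
    csInf_le ⟨0, by rintro _ ⟨y, -, -, rfl⟩; exact div_nonneg (sqnorm_nonneg _) (sqnorm_nonneg _)⟩
      ⟨x, hx0, hx, rfl⟩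
  rwa [le_div_iff₀ hpos] at hle

lemma fls_eq_add_dot_grad (A : Matrix (Fin m) (Fin n) ℝ) (b : Fin m → ℝ) (x y : Fin n → ℝ) :
    fls A b y = fls A b x + dot (grad A b x) (y - x) + sqnorm (A *ᵥ (y - x)) / 2 := by
  have hy : A *ᵥ y - b = (A *ᵥ x - b) + A *ᵥ (y - x) := by
    rw [mulVec_sub]; abel
  have hdot : dot (grad A b x) (y - x) = (A *ᵥ x - b) ⬝ᵥ A *ᵥ (y - x) := by
    rw [grad, mulVec_transpose, dotProduct_mulVec]; rfl
  rw [fls, hy, sqnorm_add, hdot, fls]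
  ring

lemma l1_add_smul_sub_le {a : ℝ} (ha₀ : 0 ≤ a) (ha₁ : a ≤ 1) (x y : Fin n → ℝ) :
    l1 (x + a • (y - x)) ≤ (1 - a) * l1 x + a * l1 y := by
  simp only [l1, Finset.mul_sum, ← Finset.sum_add_distrib]
  refine Finset.sum_le_sum fun i _ => ?_
  calc |(x + a • (y - x)) i| = |(1 - a) * x i + a * y i| := by
        simp only [Pi.add_apply, Pi.smul_apply, Pi.sub_apply, smul_eq_mul]; congr 1; ring
    _ ≤ |(1 - a) * x i| + |a * y i| := abs_add_le _ _
    _ = (1 - a) * |x i| + a * |y i| := by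
        rw [abs_mul, abs_mul, abs_of_nonneg (sub_nonneg.mpr ha₁), abs_of_nonneg ha₀]

lemma psi_add_smul_sub_le (A : Matrix (Fin m) (Fin n) ℝ) (b : Fin m → ℝ) {lam : ℝ}
    (hlam : 0 ≤ lam) (L : ℝ) {a : ℝ} (ha₀ : 0 ≤ a) (ha₁ : a ≤ 1) (x y : Fin n → ℝ) :
    psi A b lam L x (x + a • (y - x)) ≤ (1 - a) * phi A b lam x + a * phi A b lam y
      + (a ^ 2 * L * sqnorm (y - x) - a * sqnorm (A *ᵥ (y - x))) / 2 := by
  have hlin : dot (grad A b x) (a • (y - x)) = a * dot (grad A b x) (y - x) := by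
    rw [dot_eq_dotProduct, dotProduct_smul, smul_eq_mul, dot_eq_dotProduct]
  have hf := fls_eq_add_dot_grad A b x y
  have hl1 := mul_le_mul_of_nonneg_left (l1_add_smul_sub_le ha₀ ha₁ x y) hlam
  rw [psi, add_sub_cancel_left, hlin, sqnorm_smul, phi, phi]
  linear_combination hl1 - a * hf

theorem stmt10_general {m n : ℕ} (A : Matrix (Fin m) (Fin n) ℝ) (b : Fin m → ℝ)
    (S : Finset (Fin n)) (lam : ℝ) (hlam : 0 < lam) (st : ℕ)
    (hrho : 0 < rhoMinus A (S.card + 2 * st))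
    (xstar : Fin n → ℝ) (hmin : ∀ u, phi A b lam xstar ≤ phi A b lam u)
    (hsp : l0on Sᶜ xstar ≤ st)
    (x : Fin n → ℝ) (hx : l0on Sᶜ x ≤ st)
    (M : ℝ) (hM : rhoMinus A (S.card + 2 * st) / 2 ≤ M)
    (xplus : Fin n → ℝ) (hT : ∀ u, psi A b lam M x xplus ≤ psi A b lam M x u)
    (hdesc : phi A b lam xplus ≤ psi A b lam M x xplus) :
    phi A b lam xplus - phi A b lam xstar ≤
      (1 - rhoMinus A (S.card + 2 * st) / (4 * M)) *
        (phi A b lam x - phi A b lam xstar) := by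
  set ρ := rhoMinus A (S.card + 2 * st)
  have hM₀ : 0 < M := by linarith
  set a := ρ / (2 * M) with ha
  have ha₀ : 0 ≤ a := by positivity
  have ha₁ : a ≤ 1 := (div_le_one (by positivity)).mpr (by linarith)
  have hsparse : l0 (xstar - x) ≤ S.card + 2 * st := by
    have := l0on_sub_le Sᶜ xstar x
    linarith [l0_le_card_add_l0on_compl S (xstar - x)]
  have hRE : ρ * sqnorm (xstar - x) ≤ sqnorm (A *ᵥ (xstar - x)) :=
    rhoMinus_mul_sqnorm_le A hsparse
  have hcontract : phi A b lam xplus ≤ (1 - a) * phi A b lam x + a * phi A b lam xstar := by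
    have hmodel := psi_add_smul_sub_le A b hlam.le M ha₀ ha₁ x xstar
    have hprox : a ^ 2 * M * sqnorm (xstar - x) = a * (ρ * sqnorm (xstar - x)) / 2 := by
      rw [ha]; field_simp
    have hgap := mul_le_mul_of_nonneg_left hRE ha₀
    have hQ := mul_nonneg ha₀ (sqnorm_nonneg (A *ᵥ (xstar - x)))
    linarith [hT (x + a • (xstar - x))]
  have hcoef : ρ / (4 * M) = a / 2 := by rw [ha]; field_simp; ring
  rw [hcoef]
  linarith [mul_nonneg ha₀ (sub_nonneg.mpr (hmin x))]

theorem stmt10 {m n : ℕ} (A : Matrix (Fin m) (Fin n) ℝ) (b : Fin m → ℝ)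
    (S : Finset (Fin n)) (lam : ℝ) (hlam : 0 < lam) (st : ℕ) (hst : 1 ≤ st)
    (hrho : 0 < rhoMinus A (S.card + 2 * st))
    (xstar : Fin n → ℝ) (hmin : ∀ u, phi A b lam xstar ≤ phi A b lam u)
    (hsp : l0on Sᶜ xstar ≤ st)
    (x : Fin n → ℝ) (hx : l0on Sᶜ x ≤ st)
    (M : ℝ) (hM : rhoMinus A (S.card + 2 * st) / 2 ≤ M)
    (xplus : Fin n → ℝ) (hT : ∀ u, psi A b lam M x xplus ≤ psi A b lam M x u)
    (hdesc : phi A b lam xplus ≤ psi A b lam M x xplus) :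
    phi A b lam xplus - phi A b lam xstar ≤
      (1 - rhoMinus A (S.card + 2 * st) / (4 * M)) *
        (phi A b lam x - phi A b lam xstar) :=
  stmt10_general A b S lam hlam st hrho xstar hmin hsp x hx M hM xplus hT hdesc

end PGH
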